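/- Let B be Nagata's ring: B = S⁻¹A where A is the polynomial ring over a field k in blocks x⁽ⁿ⁾₁, …, x⁽ⁿ⁾ₙ (n ≥ 1), 𝔭ₙ the prime generated by the n-th block, and S = A \ ⋃ₙ 𝔭ₙ. Then for every prime ideal 𝔭 of B, the local ring B_𝔭 is essentially of finite type over a field. -/

import Mathlib

universe u

/-- The index set of the variables of Nagata's polynomial ring: for each `n : ℕ` there is a
block of `n + 1` variables (so blocks of every finite positive size occur). -/
abbrev NagataIdx : Type := Σ n : ℕ, Fin (n + 1)

/-- Nagata's polynomial ring over `k` in countably many variables grouped in blocks. -/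
abbrev NagataA (k : Type u) [Field k] : Type u := MvPolynomial NagataIdx k

/-- The ideal of `NagataA k` generated by the `n`-th block of variables. -/
noncomputable def nagataPrime (k : Type u) [Field k] (n : ℕ) : Ideal (NagataA k) :=
  Ideal.span (MvPolynomial.X '' {i : NagataIdx | i.1 = n})


open MvPolynomial

variable (k : Type u) [Field k] (n : ℕ)

lemma mem_nagataPrime_iff {f : NagataA k} :
    f ∈ nagataPrime k n ↔ ∀ m ∈ f.support, ∃ i : NagataIdx, i.1 = n ∧ m i ≠ 0 := by
  rw [nagataPrime, MvPolynomial.mem_ideal_span_X_image]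
  simp only [Set.mem_setOf_eq, exists_prop]

noncomputable def nagataKill : NagataA k →ₐ[k] MvPolynomial {i : NagataIdx // ¬ i.1 = n} k :=
  MvPolynomial.aeval (fun i => if h : i.1 = n then 0 else MvPolynomial.X ⟨i, h⟩)

lemma nagataKill_sub_mem (f : NagataA k) :
    f - MvPolynomial.rename Subtype.val (nagataKill k n f) ∈ nagataPrime k n := by
  induction f using MvPolynomial.induction_on with
  | C a =>
      simp only [nagataKill, aeval_C, algebraMap_eq, rename_C, sub_self]
      exact Ideal.zero_mem _
  | add p q hp hq =>
      have := Ideal.add_mem _ hp hq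
      rw [map_add, map_add]
      convert this using 1
      ring
  | mul_X p i hp =>
      by_cases h : i.1 = n
      · have hX : (X i : NagataA k) ∈ nagataPrime k n :=
          Ideal.subset_span ⟨i, h, rfl⟩
        have hXi : nagataKill k n (X i) = 0 := by simp [nagataKill, dif_pos h]
        rw [map_mul, hXi, mul_zero, map_zero, sub_zero]
        exact Ideal.mul_mem_left _ p hX
      · have hXi : nagataKill k n (X i) = X (⟨i, h⟩ : {i : NagataIdx // ¬ i.1 = n}) := by
          simp [nagataKill, dif_neg h]
        rw [map_mul, hXi, map_mul, rename_X]
        have heq : p * X i - MvPolynomial.rename (Subtype.val)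
            ((nagataKill k n) p) * X i
            = (p - MvPolynomial.rename Subtype.val ((nagataKill k n) p)) * X i := by ring
        rw [heq]
        exact Ideal.mul_mem_right _ _ hp

lemma nagataPrime_eq_ker : nagataPrime k n = RingHom.ker (nagataKill k n) := by
  apply le_antisymm
  · rw [nagataPrime, Ideal.span_le]
    rintro _ ⟨i, hi, rfl⟩
    have hi' : i.1 = n := hi
    simp only [SetLike.mem_coe, RingHom.mem_ker]
    simp [nagataKill, dif_pos hi']
  · intro f hf
    have h0 : nagataKill k n f = 0 := hf
    have := nagataKill_sub_mem k n f
    rwa [h0, map_zero, sub_zero] at this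

instance nagataPrime_isPrime : (nagataPrime k n).IsPrime := by
  rw [nagataPrime_eq_ker]
  exact RingHom.ker_isPrime _

lemma mem_blocks_of_mem_nagataPrime {f : NagataA k} (hf : f ≠ 0) {m : ℕ}
    (hm : f ∈ nagataPrime k m) : m ∈ f.vars.image Sigma.fst := by
  obtain ⟨d, hd⟩ := (MvPolynomial.support_nonempty.mpr hf)
  obtain ⟨i, hi, hine⟩ := (mem_nagataPrime_iff k m).mp hm d hd
  refine Finset.mem_image.mpr ⟨i, ?_, hi⟩
  rw [MvPolynomial.mem_vars]
  exact ⟨d, hd, Finsupp.mem_support_iff.mpr hine⟩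

lemma exists_le_nagataPrime (q : Ideal (NagataA k))
    (hq : (q : Set (NagataA k)) ⊆ ⋃ m, (nagataPrime k m : Set (NagataA k))) :
    ∃ m, q ≤ nagataPrime k m := by
  classical
  by_cases hbot : q = ⊥
  · exact ⟨0, hbot ▸ bot_le⟩
  obtain ⟨f, hfq, hf0⟩ := Submodule.exists_mem_ne_zero_of_ne_bot hbot
  set T : Finset ℕ := f.vars.image Sigma.fst with hT
  have claim : (q : Set (NagataA k)) ⊆ ⋃ m ∈ (T : Set ℕ), (nagataPrime k m : Set (NagataA k)) := by
    intro g hg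
    by_contra hng
    simp only [Set.mem_iUnion, SetLike.mem_coe, not_exists] at hng
    -- pick a big fresh block
    set V : Finset ℕ := (f.vars ∪ g.vars).image Sigma.fst with hV
    set Mb : ℕ := V.sup id + 1 with hMb
    have hMbV : Mb ∉ V := by
      intro hmem
      have h2 := Finset.le_sup (f := id) hmem
      simp only [id] at h2
      omega
    set i₀ : NagataIdx := ⟨Mb, 0⟩ with hi₀
    have hf0' : ∀ d ∈ f.support, (d : NagataIdx →₀ ℕ) i₀ = 0 := by
      intro d hd
      by_contra hne
      apply hMbV
      refine Finset.mem_image.mpr ⟨i₀, ?_, rfl⟩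
      exact Finset.mem_union_left _ ((MvPolynomial.mem_vars _).mpr
        ⟨d, hd, Finsupp.mem_support_iff.mpr hne⟩)
    have hg0' : ∀ d ∈ g.support, (d : NagataIdx →₀ ℕ) i₀ = 0 := by
      intro d hd
      by_contra hne
      apply hMbV
      refine Finset.mem_image.mpr ⟨i₀, ?_, rfl⟩
      exact Finset.mem_union_right _ ((MvPolynomial.mem_vars _).mpr
        ⟨d, hd, Finsupp.mem_support_iff.mpr hne⟩)
    -- supports of X i₀ * g
    have hXg_supp : ∀ d ∈ (X (R := k) i₀ * g).support,
        ∃ d' ∈ g.support, d = Finsupp.single i₀ 1 + d' := by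
      intro d hd
      rw [MvPolynomial.support_X_mul] at hd
      obtain ⟨d', hd', rfl⟩ := Finset.mem_map.mp hd
      exact ⟨d', hd', rfl⟩
    have hXg_i₀ : ∀ d ∈ (X (R := k) i₀ * g).support, (d : NagataIdx →₀ ℕ) i₀ ≠ 0 := by
      intro d hd
      obtain ⟨d', _, rfl⟩ := hXg_supp d hd
      simp [Finsupp.single_apply]
    -- h := f + X i₀ * g
    have hh : f + X i₀ * g ∈ q := q.add_mem hfq (q.mul_mem_left _ hg)
    obtain ⟨U, ⟨m, rfl⟩, hmem⟩ := hq hh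
    have hcoef_f : ∀ d ∈ f.support, coeff d (f + X i₀ * g) ≠ 0 := by
      intro d hd
      have h1 : coeff d (X (R := k) i₀ * g) = 0 := by
        rw [← MvPolynomial.notMem_support_iff]
        intro hds
        exact (hXg_i₀ d hds) (hf0' d hd)
      rw [coeff_add, h1, add_zero]
      exact MvPolynomial.mem_support_iff.mp hd
    have hcoef_g : ∀ d ∈ (X (R := k) i₀ * g).support, coeff d (f + X i₀ * g) ≠ 0 := by
      intro d hd
      have h1 : coeff d f = 0 := by
        rw [← MvPolynomial.notMem_support_iff]
        intro hds
        exact (hXg_i₀ d hd) (hf0' d hds)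
      rw [coeff_add, h1, zero_add]
      exact MvPolynomial.mem_support_iff.mp hd
    have hfm : f ∈ nagataPrime k m := by
      rw [mem_nagataPrime_iff]
      intro d hd
      exact (mem_nagataPrime_iff k m).mp hmem d (MvPolynomial.mem_support_iff.mpr (hcoef_f d hd))
    have hXgm : X (R := k) i₀ * g ∈ nagataPrime k m := by
      rw [mem_nagataPrime_iff]
      intro d hd
      exact (mem_nagataPrime_iff k m).mp hmem d (MvPolynomial.mem_support_iff.mpr (hcoef_g d hd))
    have hmT : m ∈ T := mem_blocks_of_mem_nagataPrime k hf0 hfm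
    have hmMb : m ≠ Mb := by
      intro h
      apply hMbV
      rw [← h]
      apply Finset.mem_image.mp hmT |>.elim
      intro i hi
      exact Finset.mem_image.mpr ⟨i, Finset.mem_union_left _ hi.1, hi.2⟩
    -- deduce g ∈ nagataPrime k m
    have hgm : g ∈ nagataPrime k m := by
      rw [mem_nagataPrime_iff]
      intro d' hd'
      have hd : Finsupp.single i₀ 1 + d' ∈ (X (R := k) i₀ * g).support := by
        rw [MvPolynomial.support_X_mul, Finset.mem_map]
        exact ⟨d', hd', rfl⟩
      obtain ⟨i, hin, hine⟩ := (mem_nagataPrime_iff k m).mp hXgm _ hd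
      refine ⟨i, hin, ?_⟩
      have hii : i₀ ≠ i := by
        intro h
        rw [← h] at hin
        exact hmMb hin.symm
      intro hzero
      apply hine
      rw [Finsupp.add_apply, hzero, Finsupp.single_apply, if_neg hii, add_zero]
    exact hng m hmT hgm
  rw [Ideal.subset_union_prime 0 0 (fun i _ _ _ => nagataPrime_isPrime k i)] at claim
  obtain ⟨m, _, hle⟩ := claim
  exact ⟨m, hle⟩

noncomputable def nagataEquiv :
    NagataA k ≃ₐ[k] MvPolynomial {i : NagataIdx // i.1 = n}
      (MvPolynomial {i : NagataIdx // ¬ i.1 = n} k) :=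
  (renameEquiv k (Equiv.sumCompl (fun i : NagataIdx => i.1 = n)).symm).trans
    (sumAlgEquiv k _ _)

lemma nagataEquiv_symm_C (c : MvPolynomial {i : NagataIdx // ¬ i.1 = n} k) :
    (nagataEquiv k n).symm (MvPolynomial.C c) = rename Subtype.val c := by
  have key : (nagataEquiv k n) (rename Subtype.val c) = MvPolynomial.C c := by
    rw [nagataEquiv]
    simp only [AlgEquiv.trans_apply, renameEquiv_apply]
    rw [rename_rename]
    have hfun : ((Equiv.sumCompl (fun i : NagataIdx => i.1 = n)).symm ∘ Subtype.val)
        = (Sum.inr : {i : NagataIdx // ¬ i.1 = n} →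
            {i : NagataIdx // i.1 = n} ⊕ {i : NagataIdx // ¬ i.1 = n}) := by
      funext j
      simp only [Function.comp_apply]
      rw [Equiv.sumCompl_symm_apply_of_neg (p := fun i : NagataIdx => i.1 = n) j.2]
    rw [hfun]
    have := congrArg (fun (φ : MvPolynomial {i : NagataIdx // ¬ i.1 = n} k →ₐ[k] _) => φ c)
      (sumAlgEquiv_comp_rename_inr k {i : NagataIdx // i.1 = n} {i : NagataIdx // ¬ i.1 = n})
    simpa [MvPolynomial.algebraMap_eq] using this
  rw [← key, AlgEquiv.symm_apply_apply]

lemma rename_val_mem_nagataPrime {c : MvPolynomial {i : NagataIdx // ¬ i.1 = n} k}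
    (hc : rename Subtype.val c ∈ nagataPrime k n) : c = 0 := by
  by_contra h0
  obtain ⟨d, hd⟩ := MvPolynomial.support_nonempty.mpr h0
  have hd' : Finsupp.mapDomain Subtype.val d ∈ (rename Subtype.val c).support := by
    rw [MvPolynomial.support_rename_of_injective Subtype.val_injective]
    exact Finset.mem_image.mpr ⟨d, hd, rfl⟩
  obtain ⟨i, hin, hine⟩ := (mem_nagataPrime_iff k n).mp hc _ hd'
  have : i ∈ (Finsupp.mapDomain Subtype.val d).support := Finsupp.mem_support_iff.mpr hine
  have hsub := Finsupp.mapDomain_support this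
  obtain ⟨j, _, rfl⟩ := Finset.mem_image.mp hsub
  exact j.2 hin

def nagataBlockEquiv : {i : NagataIdx // i.1 = n} ≃ Fin (n + 1) where
  toFun i := Fin.cast (by rw [i.2]) i.1.2
  invFun j := ⟨⟨n, j⟩, rfl⟩
  left_inv := by
    rintro ⟨⟨m, a⟩, h⟩
    dsimp only at h
    subst h
    rfl
  right_inv j := rfl

instance : Finite {i : NagataIdx // i.1 = n} :=
  Finite.of_equiv (Fin (n + 1)) (nagataBlockEquiv n).symm


set_option synthInstance.maxHeartbeats 1000000 in
set_option maxHeartbeats 2000000 in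
theorem nagata_local_rings_essFiniteType (k : Type u) [Field k] (S : Submonoid (NagataA k))
    (hS : (S : Set (NagataA k)) = (⋃ n : ℕ, (nagataPrime k n : Set (NagataA k)))ᶜ)
    (p : PrimeSpectrum (Localization S)) :
    ∃ (F : Type u) (_ : Field F) (_ : Algebra F (Localization.AtPrime p.asIdeal)),
      Algebra.EssFiniteType F (Localization.AtPrime p.asIdeal) := by
  classical
  haveI hp := p.2
  set q : Ideal (NagataA k) := p.asIdeal.comap (algebraMap (NagataA k) (Localization S)) with hq_def
  haveI : q.IsPrime := Ideal.IsPrime.comap _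
  have hqU : (q : Set (NagataA k)) ⊆ ⋃ m, (nagataPrime k m : Set (NagataA k)) := by
    intro x hx
    have hxS : x ∉ S := by
      intro hxS
      have hunit : IsUnit (algebraMap (NagataA k) (Localization S) x) :=
        IsLocalization.map_units _ ⟨x, hxS⟩
      exact p.2.ne_top (Ideal.eq_top_of_isUnit_mem _ (Ideal.mem_comap.mp hx) hunit)
    have hxc : x ∉ ((⋃ m, (nagataPrime k m : Set (NagataA k)))ᶜ) := by
      rw [← hS]; exact hxS
    simpa using hxc
  obtain ⟨n, hqn⟩ := exists_le_nagataPrime k q hqU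
  -- setup of rings
  let C : Type u := MvPolynomial {i : NagataIdx // ¬ i.1 = n} k
  let F : Type u := FractionRing C
  let P : Type u := MvPolynomial {i : NagataIdx // i.1 = n} C
  let D : Type u := MvPolynomial {i : NagataIdx // i.1 = n} F
  let e : NagataA k ≃ₐ[k] P := nagataEquiv k n
  letI : Algebra P D := MvPolynomial.algebraMvPolynomial
  haveI hlocPD : IsLocalization
      ((nonZeroDivisors C).map (MvPolynomial.C : C →+* P)) D :=
    MvPolynomial.isLocalization _ _
  letI : Algebra (NagataA k) D :=
    ((algebraMap P D).comp (e.symm.toRingEquiv).symm.toRingHom).toAlgebra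
  haveI hlocAD : IsLocalization
      (((nonZeroDivisors C).map (MvPolynomial.C : C →+* P)).map
        (e.symm.toRingEquiv).toMonoidHom) D :=
    IsLocalization.isLocalization_of_base_ringEquiv _ _ e.symm.toRingEquiv
  set M_A : Submonoid (NagataA k) :=
    ((nonZeroDivisors C).map (MvPolynomial.C : C →+* P)).map
      (e.symm.toRingEquiv).toMonoidHom with hM_A
  have hMA : M_A ≤ q.primeCompl := by
    rintro x ⟨y, ⟨c, hc, rfl⟩, rfl⟩
    intro hxq
    have hx : (nagataEquiv k n).symm (MvPolynomial.C c) ∈ nagataPrime k n := hqn hxq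
    rw [nagataEquiv_symm_C] at hx
    have : c = 0 := rename_val_mem_nagataPrime k n hx
    rw [this] at hc
    exact (mem_nonZeroDivisors_iff_ne_zero.mp hc) rfl
  haveI hAtPrime : IsLocalization.AtPrime (Localization.AtPrime p.asIdeal) q :=
    IsLocalization.isLocalization_atPrime_localization_atPrime S p.asIdeal
  letI : Algebra D (Localization.AtPrime p.asIdeal) :=
    IsLocalization.localizationAlgebraOfSubmonoidLe D _ M_A q.primeCompl hMA
  haveI : IsScalarTower (NagataA k) D (Localization.AtPrime p.asIdeal) :=
    IsLocalization.localization_isScalarTower_of_submonoid_le D _ M_A q.primeCompl hMA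
  haveI : IsLocalization (q.primeCompl.map (algebraMap (NagataA k) D))
      (Localization.AtPrime p.asIdeal) :=
    IsLocalization.isLocalization_of_submonoid_le D _ M_A q.primeCompl hMA
  haveI : Algebra.EssFiniteType D (Localization.AtPrime p.asIdeal) :=
    Algebra.EssFiniteType.of_isLocalization _ (q.primeCompl.map (algebraMap (NagataA k) D))
  haveI : Algebra.FiniteType F D := inferInstance
  letI : Algebra F (Localization.AtPrime p.asIdeal) :=
    ((algebraMap D (Localization.AtPrime p.asIdeal)).comp (algebraMap F D)).toAlgebra
  haveI : IsScalarTower F D (Localization.AtPrime p.asIdeal) :=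
    IsScalarTower.of_algebraMap_eq' rfl
  haveI hfin : Algebra.EssFiniteType F (Localization.AtPrime p.asIdeal) :=
    Algebra.EssFiniteType.comp F D (Localization.AtPrime p.asIdeal)
  exact ⟨F, inferInstance, _, hfin⟩
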